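/- arXiv:2206.09032 — 4 statements merged into one kernel-verified Lean document; each statement's English description precedes it below -/
import Mathlib

section
/- The operation ⊙ is associative: for all elements a, b, c of S, (a ⊙ b) ⊙ c = a ⊙ (b ⊙ c). -/
open Set

/-- The P-structure modeled on the real interval (-1,1): `p^+ ↦ p`, `p^- ↦ -p`.
Same signs combine via `1 - (1-p₁)(1-p₂)` (with the common sign); opposite
signs `p₁^+ ⊙ p₂^-` give `((p₁-p₂)/(1-p₂))^+` if `p₁ > p₂`,
`((p₂-p₁)/(1-p₁))^-` if `p₂ > p₁`, and `0` if `p₁ = p₂`. -/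
noncomputable def podot (x y : ℝ) : ℝ :=
  if 0 ≤ x ∧ 0 ≤ y then 1 - (1 - x) * (1 - y)
  else if x ≤ 0 ∧ y ≤ 0 then (1 + x) * (1 + y) - 1
  else if 0 < x + y then (x + y) / (1 + min x y)
  else if x + y < 0 then (x + y) / (1 - max x y)
  else 0

noncomputable def phi (x : ℝ) : ℝ := if 0 ≤ x then 1 - x else 1 / (1 + x)

lemma phi_of_nonneg {x : ℝ} (h : 0 ≤ x) : phi x = 1 - x := if_pos h

lemma phi_of_nonpos {x : ℝ} (h : x ≤ 0) : phi x = 1 / (1 + x) := by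
  rcases eq_or_lt_of_le h with h' | h'
  · simp [phi, h']
  · simp [phi, not_le.mpr h']

lemma mixed_signs {x y : ℝ} (h1 : ¬(0 ≤ x ∧ 0 ≤ y)) (h2 : ¬(x ≤ 0 ∧ y ≤ 0)) :
    (x < 0 ∧ 0 < y) ∨ (y < 0 ∧ 0 < x) := by
  by_contra hc
  push_neg at hc
  rcases lt_or_ge x 0 with h | h
  · exact h2 ⟨h.le, hc.1 h⟩
  · rcases lt_or_ge y 0 with h' | h'
    · exact h2 ⟨hc.2 h', h'.le⟩
    · exact h1 ⟨h, h'⟩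

lemma phi_inj {a b : ℝ} (ha : a ∈ Ioo (-1 : ℝ) 1) (hb : b ∈ Ioo (-1 : ℝ) 1)
    (h : phi a = phi b) : a = b := by
  obtain ⟨ha1, ha2⟩ := ha
  obtain ⟨hb1, hb2⟩ := hb
  rcases le_or_gt 0 a with hA | hA <;> rcases le_or_gt 0 b with hB | hB
  · rw [phi_of_nonneg hA, phi_of_nonneg hB] at h; linarith
  · rw [phi_of_nonneg hA, phi_of_nonpos hB.le] at h
    have h1 : (0:ℝ) < 1 + b := by linarith
    have : 1 / (1 + b) > 1 := by
      rw [gt_iff_lt, lt_div_iff₀ h1]; nlinarith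
    nlinarith [h]
  · rw [phi_of_nonpos hA.le, phi_of_nonneg hB] at h
    have h1 : (0:ℝ) < 1 + a := by linarith
    have : 1 / (1 + a) > 1 := by
      rw [gt_iff_lt, lt_div_iff₀ h1]; nlinarith
    nlinarith [h]
  · rw [phi_of_nonpos hA.le, phi_of_nonpos hB.le] at h
    have h1 : (0:ℝ) < 1 + a := by linarith
    have h2 : (0:ℝ) < 1 + b := by linarith
    field_simp at h
    linarith

lemma podot_mem {x y : ℝ} (hx : x ∈ Ioo (-1 : ℝ) 1) (hy : y ∈ Ioo (-1 : ℝ) 1) :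
    podot x y ∈ Ioo (-1 : ℝ) 1 := by
  obtain ⟨hx1, hx2⟩ := hx
  obtain ⟨hy1, hy2⟩ := hy
  unfold podot
  split_ifs with h1 h2 h3 h4
  · constructor <;> nlinarith [h1.1, h1.2]
  · constructor <;> nlinarith [h2.1, h2.2]
  · rcases mixed_signs h1 h2 with ⟨hxn, hyp⟩ | ⟨hyn, hxp⟩
    · rw [min_eq_left (by linarith)]
      have hp : (0:ℝ) < 1 + x := by linarith
      exact ⟨by nlinarith [div_pos h3 hp], by rw [div_lt_one hp]; linarith⟩
    · rw [min_eq_right (by linarith)]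
      have hp : (0:ℝ) < 1 + y := by linarith
      exact ⟨by nlinarith [div_pos h3 hp], by rw [div_lt_one hp]; linarith⟩
  · rcases mixed_signs h1 h2 with ⟨hxn, hyp⟩ | ⟨hyn, hxp⟩
    · rw [max_eq_right (by linarith)]
      have hp : (0:ℝ) < 1 - y := by linarith
      refine ⟨by rw [lt_div_iff₀ hp]; linarith,
        by nlinarith [div_neg_of_neg_of_pos h4 hp]⟩
    · rw [max_eq_left (by linarith)]
      have hp : (0:ℝ) < 1 - x := by linarith
      refine ⟨by rw [lt_div_iff₀ hp]; linarith,
        by nlinarith [div_neg_of_neg_of_pos h4 hp]⟩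
  · constructor <;> norm_num

lemma phi_podot {x y : ℝ} (hx : x ∈ Ioo (-1 : ℝ) 1) (hy : y ∈ Ioo (-1 : ℝ) 1) :
    phi (podot x y) = phi x * phi y := by
  obtain ⟨hx1, hx2⟩ := hx
  obtain ⟨hy1, hy2⟩ := hy
  unfold podot
  split_ifs with h1 h2 h3 h4
  · obtain ⟨ha, hb⟩ := h1
    rw [phi_of_nonneg (by nlinarith), phi_of_nonneg ha, phi_of_nonneg hb]
    ring
  · obtain ⟨ha, hb⟩ := h2
    have p1 : (0:ℝ) < 1 + x := by linarith
    have p2 : (0:ℝ) < 1 + y := by linarith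
    rw [phi_of_nonpos (by nlinarith), phi_of_nonpos ha, phi_of_nonpos hb,
      show (1:ℝ) + ((1 + x) * (1 + y) - 1) = (1 + x) * (1 + y) by ring,
      one_div, one_div, one_div, mul_inv]
  · rcases mixed_signs h1 h2 with ⟨hxn, hyp⟩ | ⟨hyn, hxp⟩
    · rw [min_eq_left (by linarith)]
      have hp : (0:ℝ) < 1 + x := by linarith
      rw [phi_of_nonneg (div_pos h3 hp).le, phi_of_nonpos hxn.le,
        phi_of_nonneg hyp.le]
      field_simp
      ring
    · rw [min_eq_right (by linarith)]
      have hp : (0:ℝ) < 1 + y := by linarith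
      rw [phi_of_nonneg (div_pos h3 hp).le, phi_of_nonneg hxp.le,
        phi_of_nonpos hyn.le]
      field_simp
      ring

  · rcases mixed_signs h1 h2 with ⟨hxn, hyp⟩ | ⟨hyn, hxp⟩
    · rw [max_eq_right (by linarith)]
      have hp : (0:ℝ) < 1 - y := by linarith
      have hq : (0:ℝ) < 1 + x := by linarith
      rw [phi_of_nonpos (div_neg_of_neg_of_pos h4 hp).le, phi_of_nonpos hxn.le,
        phi_of_nonneg hyp.le,
        show (1:ℝ) + (x + y) / (1 - y) = (1 + x) / (1 - y) by field_simp; ring,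
        one_div_div]
      field_simp
    · rw [max_eq_left (by linarith)]
      have hp : (0:ℝ) < 1 - x := by linarith
      have hq : (0:ℝ) < 1 + y := by linarith
      rw [phi_of_nonpos (div_neg_of_neg_of_pos h4 hp).le, phi_of_nonneg hxp.le,
        phi_of_nonpos hyn.le,
        show (1:ℝ) + (x + y) / (1 - x) = (1 + y) / (1 - x) by field_simp; ring,
        one_div_div]
      field_simp

  · have hxy : x + y = 0 := by linarith [not_lt.mp h3, not_lt.mp h4]
    rcases mixed_signs h1 h2 with ⟨hxn, hyp⟩ | ⟨hyn, hxp⟩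
    · have hq : (0:ℝ) < 1 + x := by linarith
      rw [phi_of_nonneg le_rfl, phi_of_nonpos hxn.le, phi_of_nonneg hyp.le,
        show (1:ℝ) - y = 1 + x by linarith]
      field_simp
      norm_num
    · have hq : (0:ℝ) < 1 + y := by linarith
      rw [phi_of_nonneg le_rfl, phi_of_nonneg hxp.le, phi_of_nonpos hyn.le,
        show (1:ℝ) - x = 1 + y by linarith]
      field_simp
      norm_num

/-- The operation ⊙ is associative on S. -/
theorem podot_assoc :
    ∀ x ∈ Set.Ioo (-1 : ℝ) 1, ∀ y ∈ Set.Ioo (-1 : ℝ) 1, ∀ z ∈ Set.Ioo (-1 : ℝ) 1,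
      podot (podot x y) z = podot x (podot y z) := by
  intro x hx y hy z hz
  apply phi_inj (podot_mem (podot_mem hx hy) hz) (podot_mem hx (podot_mem hy hz))
  rw [phi_podot (podot_mem hx hy) hz, phi_podot hx hy,
      phi_podot hx (podot_mem hy hz), phi_podot hy hz]
  ring
end

section
/- The P-structure (S, ⊙, 0) is a commutative group. -/
open Set

noncomputable def pf (x : ℝ) : ℝ :=
  if 0 ≤ x then -Real.log (1 - x) else Real.log (1 + x)

noncomputable def pg (t : ℝ) : ℝ :=
  if 0 ≤ t then 1 - Real.exp (-t) else Real.exp t - 1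

lemma pg_mem (t : ℝ) : pg t ∈ Set.Ioo (-1 : ℝ) 1 := by
  unfold pg
  split_ifs with h
  · have h1 : Real.exp (-t) ≤ 1 := by
      rw [show (1:ℝ) = Real.exp 0 by simp]
      exact Real.exp_le_exp.mpr (by linarith)
    have h2 := Real.exp_pos (-t)
    constructor <;> [linarith; linarith]
  · have h1 : Real.exp t < 1 := by
      rw [show (1:ℝ) = Real.exp 0 by simp]
      exact Real.exp_lt_exp.mpr (by linarith)
    have h2 := Real.exp_pos t
    constructor <;> [linarith; linarith]

lemma pf_zero : pf 0 = 0 := by simp [pf]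

lemma pg_zero : pg 0 = 0 := by simp [pg]

lemma pf_pg (t : ℝ) : pf (pg t) = t := by
  unfold pf pg
  by_cases h : 0 ≤ t
  · rw [if_pos h]
    have h1 : Real.exp (-t) ≤ 1 := by
      rw [show (1:ℝ) = Real.exp 0 by simp]
      exact Real.exp_le_exp.mpr (by linarith)
    rw [if_pos (by linarith : (0:ℝ) ≤ 1 - Real.exp (-t))]
    rw [show (1:ℝ) - (1 - Real.exp (-t)) = Real.exp (-t) by ring, Real.log_exp]
    ring
  · rw [if_neg h]
    have h1 : Real.exp t < 1 := by
      rw [show (1:ℝ) = Real.exp 0 by simp]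
      exact Real.exp_lt_exp.mpr (by linarith)
    rw [if_neg (by linarith : ¬ (0:ℝ) ≤ Real.exp t - 1)]
    rw [show (1:ℝ) + (Real.exp t - 1) = Real.exp t by ring, Real.log_exp]

lemma pg_pf {x : ℝ} (hx : x ∈ Set.Ioo (-1 : ℝ) 1) : pg (pf x) = x := by
  obtain ⟨hx1, hx2⟩ := hx
  unfold pf pg
  by_cases h : 0 ≤ x
  · rw [if_pos h]
    have h1 : (0:ℝ) < 1 - x := by linarith
    have h2 : Real.log (1 - x) ≤ 0 := Real.log_nonpos (by linarith) (by linarith)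
    rw [if_pos (by linarith : (0:ℝ) ≤ -Real.log (1 - x)), neg_neg, Real.exp_log h1]
    ring
  · rw [if_neg h]
    have h1 : (0:ℝ) < 1 + x := by linarith
    have h2 : Real.log (1 + x) < 0 := Real.log_neg h1 (by linarith)
    rw [if_neg (by linarith : ¬ (0:ℝ) ≤ Real.log (1 + x)), Real.exp_log h1]
    ring

lemma pf_neg (x : ℝ) : pf (-x) = -pf x := by
  unfold pf
  rcases lt_trichotomy x 0 with h | h | h
  · rw [if_pos (by linarith : (0:ℝ) ≤ -x), if_neg (by linarith : ¬ (0:ℝ) ≤ x)]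
    rw [show (1:ℝ) - -x = 1 + x by ring]
  · subst h; simp
  · rw [if_neg (by linarith : ¬ (0:ℝ) ≤ -x), if_pos (by linarith : (0:ℝ) ≤ x)]
    rw [show (1:ℝ) + -x = 1 - x by ring]
    ring

lemma pg_neg_log {p : ℝ} (hp : 0 < p) (hp1 : p ≤ 1) : pg (-Real.log p) = 1 - p := by
  unfold pg
  have h2 : Real.log p ≤ 0 := Real.log_nonpos (by linarith) hp1
  rw [if_pos (by linarith : (0:ℝ) ≤ -Real.log p), neg_neg, Real.exp_log hp]

lemma pg_log {p : ℝ} (hp : 0 < p) (hp1 : p ≤ 1) : pg (Real.log p) = p - 1 := by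
  unfold pg
  rcases eq_or_lt_of_le hp1 with h | h
  · subst h; simp
  · have h2 : Real.log p < 0 := Real.log_neg hp h
    rw [if_neg (by linarith : ¬ (0:ℝ) ≤ Real.log p), Real.exp_log hp]

lemma podot_zero_left (y : ℝ) : podot 0 y = y := by
  unfold podot
  by_cases hy : 0 ≤ y
  · rw [if_pos ⟨le_refl 0, hy⟩]; ring
  · rw [if_neg (by tauto), if_pos ⟨le_refl 0, le_of_not_ge hy⟩]; ring

lemma podot_zero_right (x : ℝ) : podot x 0 = x := by
  unfold podot
  by_cases hx : 0 ≤ x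
  · rw [if_pos ⟨hx, le_refl 0⟩]; ring
  · rw [if_neg (by tauto), if_pos ⟨le_of_not_ge hx, le_refl 0⟩]; ring

lemma podot_eq {x y : ℝ} (hx : x ∈ Set.Ioo (-1 : ℝ) 1) (hy : y ∈ Set.Ioo (-1 : ℝ) 1) :
    podot x y = pg (pf x + pf y) := by
  obtain ⟨hx1, hx2⟩ := hx
  obtain ⟨hy1, hy2⟩ := hy
  have h1x : (0:ℝ) < 1 - x := by linarith
  have h1x' : (0:ℝ) < 1 + x := by linarith
  have h1y : (0:ℝ) < 1 - y := by linarith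
  have h1y' : (0:ℝ) < 1 + y := by linarith
  by_cases hx0 : x = 0
  · subst hx0
    rw [podot_zero_left, pf_zero, zero_add, pg_pf ⟨hy1, hy2⟩]
  by_cases hy0 : y = 0
  · subst hy0
    rw [podot_zero_right, pf_zero, add_zero, pg_pf ⟨hx1, hx2⟩]
  rcases lt_or_gt_of_ne hx0 with hxneg | hxpos
  · rcases lt_or_gt_of_ne hy0 with hyneg | hypos
    · -- both negative
      unfold podot pf
      rw [if_neg (by push_neg; intro h; linarith), if_pos ⟨le_of_lt hxneg, le_of_lt hyneg⟩]
      rw [if_neg (by linarith : ¬ (0:ℝ) ≤ x), if_neg (by linarith : ¬ (0:ℝ) ≤ y)]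
      rw [← Real.log_mul h1x'.ne' h1y'.ne']
      rw [pg_log (mul_pos h1x' h1y') (by nlinarith)]
    · -- x < 0 < y
      unfold podot pf
      rw [if_neg (by push_neg; intro h; linarith),
          if_neg (by push_neg; intro h; linarith)]
      rw [if_neg (by linarith : ¬ (0:ℝ) ≤ x), if_pos (by linarith : (0:ℝ) ≤ y)]
      have hmin : min x y = x := min_eq_left (by linarith)
      have hmax : max x y = y := max_eq_right (by linarith)
      rw [hmin, hmax]
      have hsum : Real.log (1 + x) + -Real.log (1 - y) = Real.log ((1 + x) / (1 - y)) := by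
        rw [Real.log_div h1x'.ne' h1y.ne']; ring
      have hsum' : Real.log (1 + x) + -Real.log (1 - y) = -Real.log ((1 - y) / (1 + x)) := by
        rw [Real.log_div h1y.ne' h1x'.ne']; ring
      rcases lt_trichotomy (x + y) 0 with h | h | h
      · rw [if_neg (by linarith), if_pos h, hsum]
        rw [pg_log (by positivity) (by rw [div_le_one h1y]; linarith)]
        field_simp
        try ring
      · rw [if_neg (by linarith), if_neg (by linarith)]
        have hyx : y = -x := by linarith
        subst hyx
        rw [show (1:ℝ) - -x = 1 + x by ring, add_neg_cancel, pg_zero]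
      · rw [if_pos h, hsum']
        rw [pg_neg_log (by positivity) (by rw [div_le_one h1x']; linarith)]
        field_simp
        try ring
  · rcases lt_or_gt_of_ne hy0 with hyneg | hypos
    · -- y < 0 < x
      unfold podot pf
      rw [if_neg (by push_neg; intro h; linarith),
          if_neg (by push_neg; intro h; linarith)]
      rw [if_pos (by linarith : (0:ℝ) ≤ x), if_neg (by linarith : ¬ (0:ℝ) ≤ y)]
      have hmin : min x y = y := min_eq_right (by linarith)
      have hmax : max x y = x := max_eq_left (by linarith)
      rw [hmin, hmax]
      have hsum : -Real.log (1 - x) + Real.log (1 + y) = Real.log ((1 + y) / (1 - x)) := by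
        rw [Real.log_div h1y'.ne' h1x.ne']; ring
      have hsum' : -Real.log (1 - x) + Real.log (1 + y) = -Real.log ((1 - x) / (1 + y)) := by
        rw [Real.log_div h1x.ne' h1y'.ne']; ring
      rcases lt_trichotomy (x + y) 0 with h | h | h
      · rw [if_neg (by linarith), if_pos h, hsum]
        rw [pg_log (by positivity) (by rw [div_le_one h1x]; linarith)]
        field_simp
        try ring
      · rw [if_neg (by linarith), if_neg (by linarith)]
        have hyx : y = -x := by linarith
        subst hyx
        rw [show (1:ℝ) + -x = 1 - x by ring, neg_add_cancel, pg_zero]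
      · rw [if_pos h, hsum']
        rw [pg_neg_log (by positivity) (by rw [div_le_one h1y']; linarith)]
        field_simp
        try ring
    · -- both positive
      unfold podot pf
      rw [if_pos ⟨le_of_lt hxpos, le_of_lt hypos⟩]
      rw [if_pos (by linarith : (0:ℝ) ≤ x), if_pos (by linarith : (0:ℝ) ≤ y)]
      rw [show -Real.log (1 - x) + -Real.log (1 - y)
            = -Real.log ((1 - x) * (1 - y)) by rw [Real.log_mul h1x.ne' h1y.ne']; ring]
      rw [pg_neg_log (mul_pos h1x h1y) (by nlinarith)]

/-- The P-structure (S, ⊙, 0) is a commutative group: S is closed under ⊙,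
contains the neutral element 0; ⊙ is commutative and associative, 0 is neutral,
and every element has an inverse in S. -/
theorem pStructure_commGroup :
    (0 : ℝ) ∈ Set.Ioo (-1 : ℝ) 1 ∧
    (∀ x ∈ Set.Ioo (-1 : ℝ) 1, ∀ y ∈ Set.Ioo (-1 : ℝ) 1,
      podot x y ∈ Set.Ioo (-1 : ℝ) 1) ∧
    (∀ x ∈ Set.Ioo (-1 : ℝ) 1, ∀ y ∈ Set.Ioo (-1 : ℝ) 1,
      podot x y = podot y x) ∧
    (∀ x ∈ Set.Ioo (-1 : ℝ) 1, ∀ y ∈ Set.Ioo (-1 : ℝ) 1, ∀ z ∈ Set.Ioo (-1 : ℝ) 1,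
      podot (podot x y) z = podot x (podot y z)) ∧
    (∀ x ∈ Set.Ioo (-1 : ℝ) 1, podot x 0 = x ∧ podot 0 x = x) ∧
    (∀ x ∈ Set.Ioo (-1 : ℝ) 1, -x ∈ Set.Ioo (-1 : ℝ) 1 ∧ podot x (-x) = 0) := by
  have hclosed : ∀ x ∈ Set.Ioo (-1 : ℝ) 1, ∀ y ∈ Set.Ioo (-1 : ℝ) 1,
      podot x y ∈ Set.Ioo (-1 : ℝ) 1 := by
    intro x hx y hy
    rw [podot_eq hx hy]
    exact pg_mem _
  refine ⟨by norm_num, hclosed, ?_, ?_, ?_, ?_⟩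
  · intro x hx y hy
    rw [podot_eq hx hy, podot_eq hy hx, add_comm]
  · intro x hx y hy z hz
    rw [podot_eq (hclosed x hx y hy) hz, podot_eq hx hy, pf_pg,
        podot_eq hx (hclosed y hy z hz), podot_eq hy hz, pf_pg, add_assoc]
  · intro x hx
    exact ⟨podot_zero_right x, podot_zero_left x⟩
  · intro x hx
    obtain ⟨hx1, hx2⟩ := hx
    refine ⟨⟨by linarith, by linarith⟩, ?_⟩
    rw [podot_eq ⟨hx1, hx2⟩ ⟨by linarith, by linarith⟩, pf_neg, add_neg_cancel, pg_zero]
end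

section
/- The map φ sending p^+ to 1−p and p^- to 1/(1−p) is a group isomorphism from the P-structure (S, ⊙, 0) onto the multiplicative group of positive real numbers; in particular φ(a ⊙ b) = φ(a) · φ(b) for all a, b ∈ S, φ(0) = 1, and φ is a bijection from S to (0, ∞). -/
open Set

/-- The map φ sending `p^+` to `1 - p` and `p^-` to `1/(1-p)`, in the
(-1,1) model: `φ x = 1 - x` for `x ≥ 0` and `φ x = 1/(1 + x)` for `x < 0`. -/
noncomputable def pphi (x : ℝ) : ℝ := if 0 ≤ x then 1 - x else 1 / (1 + x)

lemma pphi_nonneg' (x : ℝ) (h : 0 ≤ x) : pphi x = 1 - x := if_pos h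

lemma pphi_neg' (x : ℝ) (h : x < 0) : pphi x = 1 / (1 + x) := if_neg (not_le.2 h)

/-- φ is a group isomorphism from the P-structure (S, ⊙, 0) onto the
multiplicative group of positive reals: it is multiplicative, sends 0 to 1,
and is a bijection from S onto (0, ∞). -/
theorem pphi_iso :
    (∀ x ∈ Set.Ioo (-1 : ℝ) 1, ∀ y ∈ Set.Ioo (-1 : ℝ) 1,
      pphi (podot x y) = pphi x * pphi y) ∧
    pphi 0 = 1 ∧
    Set.BijOn pphi (Set.Ioo (-1 : ℝ) 1) (Set.Ioi (0 : ℝ)) := by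
  have hzero : pphi 0 = 1 := by rw [pphi_nonneg' 0 le_rfl]; ring
  refine ⟨?_, hzero, ?_, ?_, ?_⟩
  · rintro x ⟨hx1, hx2⟩ y ⟨hy1, hy2⟩
    have hx1' : (0:ℝ) < 1 + x := by linarith
    have hy1' : (0:ℝ) < 1 + y := by linarith
    rcases lt_trichotomy x 0 with hx | hx | hx
    · rcases lt_trichotomy y 0 with hy | hy | hy
      · -- both negative
        have h1 : podot x y = (1 + x) * (1 + y) - 1 := by
          unfold podot
          rw [if_neg (fun hc => absurd hc.1 (not_le.2 hx)), if_pos ⟨hx.le, hy.le⟩]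
        have h2 : (1 + x) * (1 + y) - 1 < 0 := by nlinarith
        rw [h1, pphi_neg' _ h2, pphi_neg' _ hx, pphi_neg' _ hy]
        field_simp
        try ring
      · rw [hy, podot_zero_right, hzero]; ring
      · -- x < 0 < y
        have hc1 : ¬(0 ≤ x ∧ 0 ≤ y) := fun hc => absurd hc.1 (not_le.2 hx)
        have hc2 : ¬(x ≤ 0 ∧ y ≤ 0) := fun hc => absurd hc.2 (not_le.2 hy)
        have hmin : min x y = x := min_eq_left (by linarith)
        have hmax : max x y = y := max_eq_right (by linarith)
        rcases lt_trichotomy 0 (x + y) with hs | hs | hs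
        · have h1 : podot x y = (x + y) / (1 + x) := by
            unfold podot; rw [if_neg hc1, if_neg hc2, if_pos hs, hmin]
          have h2 : 0 ≤ (x + y) / (1 + x) := by positivity
          rw [h1, pphi_nonneg' _ h2, pphi_neg' _ hx, pphi_nonneg' _ hy.le]
          field_simp
          try ring
        · have h1 : podot x y = 0 := by
            unfold podot
            rw [if_neg hc1, if_neg hc2, if_neg (by linarith), if_neg (by linarith)]
          rw [h1, hzero, pphi_neg' _ hx, pphi_nonneg' _ hy.le]
          have hxy : x = -y := by linarith
          rw [hxy]
          have hne : (1:ℝ) + -y ≠ 0 := by linarith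
          field_simp
          ring
        · have h1 : podot x y = (x + y) / (1 - y) := by
            unfold podot
            rw [if_neg hc1, if_neg hc2, if_neg (by linarith), if_pos hs, hmax]
          have hy2' : (0:ℝ) < 1 - y := by linarith
          have h2 : (x + y) / (1 - y) < 0 := div_neg_of_neg_of_pos hs hy2'
          rw [h1, pphi_neg' _ h2, pphi_neg' _ hx, pphi_nonneg' _ hy.le]
          have hne : (1:ℝ) - y ≠ 0 := ne_of_gt hy2'
          have e : 1 + (x + y) / (1 - y) = (1 + x) / (1 - y) := by
            field_simp
            try ring
          rw [e, one_div_div, div_eq_mul_inv, one_div]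
          try ring
    · rw [hx, podot_zero_left, hzero]; ring
    · rcases lt_trichotomy y 0 with hy | hy | hy
      · -- 0 < x, y < 0
        have hc1 : ¬(0 ≤ x ∧ 0 ≤ y) := fun hc => absurd hc.2 (not_le.2 hy)
        have hc2 : ¬(x ≤ 0 ∧ y ≤ 0) := fun hc => absurd hc.1 (not_le.2 hx)
        have hmin : min x y = y := min_eq_right (by linarith)
        have hmax : max x y = x := max_eq_left (by linarith)
        rcases lt_trichotomy 0 (x + y) with hs | hs | hs
        · have h1 : podot x y = (x + y) / (1 + y) := by
            unfold podot; rw [if_neg hc1, if_neg hc2, if_pos hs, hmin]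
          have h2 : 0 ≤ (x + y) / (1 + y) := by positivity
          rw [h1, pphi_nonneg' _ h2, pphi_nonneg' _ hx.le, pphi_neg' _ hy]
          field_simp
          try ring
        · have h1 : podot x y = 0 := by
            unfold podot
            rw [if_neg hc1, if_neg hc2, if_neg (by linarith), if_neg (by linarith)]
          rw [h1, hzero, pphi_nonneg' _ hx.le, pphi_neg' _ hy]
          have hxy : y = -x := by linarith
          rw [hxy]
          have hne : (1:ℝ) + -x ≠ 0 := by linarith
          field_simp
          ring
        · have h1 : podot x y = (x + y) / (1 - x) := by
            unfold podot
            rw [if_neg hc1, if_neg hc2, if_neg (by linarith), if_pos hs, hmax]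
          have hx2' : (0:ℝ) < 1 - x := by linarith
          have h2 : (x + y) / (1 - x) < 0 := div_neg_of_neg_of_pos hs hx2'
          rw [h1, pphi_neg' _ h2, pphi_nonneg' _ hx.le, pphi_neg' _ hy]
          have hne : (1:ℝ) - x ≠ 0 := ne_of_gt hx2'
          have e : 1 + (x + y) / (1 - x) = (1 + y) / (1 - x) := by
            field_simp
            try ring
          rw [e, one_div_div, div_eq_mul_inv, one_div]
          try ring
      · rw [hy, podot_zero_right, hzero]; ring
      · -- both positive
        have h1 : podot x y = 1 - (1 - x) * (1 - y) := by
          unfold podot; rw [if_pos ⟨hx.le, hy.le⟩]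
        have h2 : 0 ≤ 1 - (1 - x) * (1 - y) := by nlinarith
        rw [h1, pphi_nonneg' _ h2, pphi_nonneg' _ hx.le, pphi_nonneg' _ hy.le]
        ring
  · -- MapsTo
    rintro x ⟨hx1, hx2⟩
    rcases le_or_gt 0 x with h | h
    · rw [mem_Ioi, pphi_nonneg' _ h]; linarith
    · rw [mem_Ioi, pphi_neg' _ h]
      have : (0:ℝ) < 1 + x := by linarith
      positivity
  · -- InjOn
    rintro x ⟨hx1, hx2⟩ y ⟨hy1, hy2⟩ hxy
    have hx1' : (0:ℝ) < 1 + x := by linarith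
    have hy1' : (0:ℝ) < 1 + y := by linarith
    rcases le_or_gt 0 x with hx | hx <;> rcases le_or_gt 0 y with hy | hy
    · rw [pphi_nonneg' _ hx, pphi_nonneg' _ hy] at hxy; linarith
    · rw [pphi_nonneg' _ hx, pphi_neg' _ hy] at hxy
      exfalso
      have h1 : 1 < 1 / (1 + y) := by rw [lt_div_iff₀ hy1']; linarith
      linarith
    · rw [pphi_neg' _ hx, pphi_nonneg' _ hy] at hxy
      exfalso
      have h1 : 1 < 1 / (1 + x) := by rw [lt_div_iff₀ hx1']; linarith
      linarith
    · rw [pphi_neg' _ hx, pphi_neg' _ hy] at hxy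
      have := div_eq_div_iff (ne_of_gt hx1') (ne_of_gt hy1') |>.mp hxy
      linarith
  · -- SurjOn
    rintro t ht
    rw [mem_Ioi] at ht
    rcases le_or_gt t 1 with h | h
    · exact ⟨1 - t, ⟨by linarith, by linarith⟩, by rw [pphi_nonneg' _ (by linarith)]; ring⟩
    · refine ⟨1 / t - 1, ⟨?_, ?_⟩, ?_⟩
      · have : 0 < 1 / t := by positivity
        linarith
      · have : 1 / t < 1 := by rw [div_lt_one (by linarith)]; linarith
        linarith
      · have hlt : 1 / t - 1 < 0 := by
          have : 1 / t < 1 := by rw [div_lt_one (by linarith)]; linarith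
          linarith
        rw [pphi_neg' _ hlt]
        field_simp
        ring
end

section
/- For a hierarchical hypergraph (for any two vertices A, B, the sets of hyperedges containing A and containing B are comparable under inclusion or disjoint), and any vertex set F, the fractional edge cover number of F equals the integral edge cover number of F. -/
open Finset

/-- Key rounding lemma: in a hierarchical hypergraph, any nonnegative fractional
cover of `F` can be rounded to a 0/1 cover of no greater total weight. -/
lemma hier_round {α : Type*} [DecidableEq α] (E : Finset (Finset α)) :
    ∀ (F : Finset α),
    (∀ x ∈ F, ∀ y ∈ F,
      E.filter (fun e => x ∈ e) ⊆ E.filter (fun e => y ∈ e) ∨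
      E.filter (fun e => y ∈ e) ⊆ E.filter (fun e => x ∈ e) ∨
      E.filter (fun e => x ∈ e) ∩ E.filter (fun e => y ∈ e) = ∅) →
    ∀ (lam : Finset α → ℝ), (∀ e ∈ E, 0 ≤ lam e) →
    (∀ x ∈ F, 1 ≤ ∑ e ∈ E.filter (fun e => x ∈ e), lam e) →
    ∃ mu : Finset α → ℝ, (∀ e ∈ E, mu e = 0 ∨ mu e = 1) ∧
      (∀ x ∈ F, 1 ≤ ∑ e ∈ E.filter (fun e => x ∈ e), mu e) ∧
      ∑ e ∈ E, mu e ≤ ∑ e ∈ E, lam e := by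
  induction E using Finset.strongInduction with
  | _ E ih =>
    intro F hhier lam h0 hcov
    rcases F.eq_empty_or_nonempty with rfl | hFne
    · exact ⟨fun _ => 0, fun e _ => Or.inl rfl, by simp,
        by simpa using Finset.sum_nonneg h0⟩
    obtain ⟨x, hxF, hxmin⟩ :=
      F.exists_min_image (fun y => (E.filter (fun e => y ∈ e)).card) hFne
    set A := E.filter (fun e => x ∈ e) with hA
    have hAE : A ⊆ E := Finset.filter_subset _ _
    have hAne : A.Nonempty := by
      rw [Finset.nonempty_iff_ne_empty]
      intro h
      have h1 := hcov x hxF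
      rw [← hA, h] at h1
      simp at h1; linarith
    have hdich : ∀ y ∈ F, A ⊆ E.filter (fun e => y ∈ e) ∨
        E.filter (fun e => y ∈ e) ∩ A = ∅ := by
      intro y hy
      rcases hhier x hxF y hy with h | h | h
      · exact Or.inl h
      · left
        have heq : E.filter (fun e => y ∈ e) = A :=
          Finset.eq_of_subset_of_card_le h (hxmin y hy)
        rw [heq]
      · right; rwa [Finset.inter_comm]
    obtain ⟨e₀, he₀⟩ := hAne
    set E' := E \ A with hE'
    have hE'ssub : E' ⊂ E := by
      refine Finset.ssubset_iff_of_subset (Finset.sdiff_subset) |>.2 ?_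
      exact ⟨e₀, hAE he₀, by simp [hE', he₀]⟩
    set F' := F.filter (fun y => E.filter (fun e => y ∈ e) ∩ A = ∅) with hF'
    have hfilt : ∀ y ∈ F', E'.filter (fun e => y ∈ e) = E.filter (fun e => y ∈ e) := by
      intro y hy
      rw [hF', Finset.mem_filter] at hy
      ext e
      simp only [hE', Finset.mem_filter, Finset.mem_sdiff]
      constructor
      · rintro ⟨⟨heE, -⟩, hye⟩; exact ⟨heE, hye⟩
      · rintro ⟨heE, hye⟩
        refine ⟨⟨heE, ?_⟩, hye⟩
        intro heA
        have : e ∈ E.filter (fun e => y ∈ e) ∩ A :=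
          Finset.mem_inter.2 ⟨Finset.mem_filter.2 ⟨heE, hye⟩, heA⟩
        rw [hy.2] at this
        exact absurd this (Finset.notMem_empty e)
    have hF'sub : F' ⊆ F := Finset.filter_subset _ _
    have hhier' : ∀ y ∈ F', ∀ z ∈ F',
        E'.filter (fun e => y ∈ e) ⊆ E'.filter (fun e => z ∈ e) ∨
        E'.filter (fun e => z ∈ e) ⊆ E'.filter (fun e => y ∈ e) ∨
        E'.filter (fun e => y ∈ e) ∩ E'.filter (fun e => z ∈ e) = ∅ := by
      intro y hy z hz
      rw [hfilt y hy, hfilt z hz]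
      exact hhier y (hF'sub hy) z (hF'sub hz)
    have h0' : ∀ e ∈ E', 0 ≤ lam e := fun e he => h0 e (Finset.sdiff_subset he)
    have hcov' : ∀ y ∈ F', 1 ≤ ∑ e ∈ E'.filter (fun e => y ∈ e), lam e := by
      intro y hy
      rw [hfilt y hy]
      exact hcov y (hF'sub hy)
    obtain ⟨mu', hmu'01, hmu'cov, hmu'w⟩ := ih E' hE'ssub F' hhier' lam h0' hcov'
    set mu : Finset α → ℝ := fun e => if e = e₀ then 1 else if e ∈ E' then mu' e else 0
      with hmu
    have hmu01 : ∀ e ∈ E, mu e = 0 ∨ mu e = 1 := by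
      intro e he
      simp only [hmu]
      split_ifs with h1 h2
      · exact Or.inr rfl
      · exact hmu'01 e h2
      · exact Or.inl rfl
    have hmunn : ∀ e ∈ E, 0 ≤ mu e := by
      intro e he
      rcases hmu01 e he with h | h <;> rw [h] <;> norm_num
    have he₀E : e₀ ∈ E := hAE he₀
    have he₀E' : e₀ ∉ E' := by simp [hE', he₀]
    refine ⟨mu, hmu01, ?_, ?_⟩
    · intro y hy
      by_cases hy' : E.filter (fun e => y ∈ e) ∩ A = ∅
      · -- y ∈ F'
        have hyF' : y ∈ F' := Finset.mem_filter.2 ⟨hy, hy'⟩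
        have h1 := hmu'cov y hyF'
        rw [hfilt y hyF'] at h1
        calc (1:ℝ) ≤ ∑ e ∈ E.filter (fun e => y ∈ e), mu' e := h1
          _ = ∑ e ∈ E.filter (fun e => y ∈ e), mu e := by
              apply Finset.sum_congr rfl
              intro e he
              have heE' : e ∈ E' := by
                rw [← hfilt y hyF'] at he
                exact (Finset.filter_subset _ _) he
              have hne : e ≠ e₀ := fun h => he₀E' (h ▸ heE')
              simp [hmu, hne, heE']
      · -- A ⊆ filter y, so e₀ ∈ filter y
        have hsub : A ⊆ E.filter (fun e => y ∈ e) := by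
          rcases hdich y hy with h | h
          · exact h
          · exact absurd h hy'
        have he₀y : e₀ ∈ E.filter (fun e => y ∈ e) := hsub he₀
        have : mu e₀ ≤ ∑ e ∈ E.filter (fun e => y ∈ e), mu e :=
          Finset.single_le_sum (fun e he => hmunn e ((Finset.filter_subset _ _) he)) he₀y
        simpa [hmu] using this
    · have hsplit : ∀ f : Finset α → ℝ,
          ∑ e ∈ E', f e + ∑ e ∈ A, f e = ∑ e ∈ E, f e := by
        intro f
        rw [hE']
        exact Finset.sum_sdiff hAE
      have hAmu : ∑ e ∈ A, mu e = 1 := by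
        rw [Finset.sum_eq_single_of_mem e₀ he₀]
        · simp [hmu]
        · intro b hb hbne
          have hbE' : b ∉ E' := by simp [hE', hb]
          simp [hmu, hbne, hbE']
      have hE'mu : ∑ e ∈ E', mu e = ∑ e ∈ E', mu' e := by
        apply Finset.sum_congr rfl
        intro e he
        have hne : e ≠ e₀ := fun h => he₀E' (h ▸ he)
        simp [hmu, hne, he]
      have hAlam : (1:ℝ) ≤ ∑ e ∈ A, lam e := hcov x hxF
      rw [← hsplit mu, ← hsplit lam, hAmu, hE'mu]
      linarith

/-- For a hierarchical hypergraph (for any two vertices, the sets of hyperedges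
containing them are comparable under inclusion or disjoint), the fractional
edge cover number of any vertex set `F` equals its integral edge cover
number. -/
theorem hierarchical_fractional_eq_integral {α : Type*} [DecidableEq α]
    (V : Finset α) (E : Finset (Finset α))
    (hEV : ∀ e ∈ E, e ⊆ V)
    (hcovered : ∀ x ∈ V, ∃ e ∈ E, x ∈ e)
    (hhier : ∀ x ∈ V, ∀ y ∈ V,
      E.filter (fun e => x ∈ e) ⊆ E.filter (fun e => y ∈ e) ∨
      E.filter (fun e => y ∈ e) ⊆ E.filter (fun e => x ∈ e) ∨
      E.filter (fun e => x ∈ e) ∩ E.filter (fun e => y ∈ e) = ∅)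
    (F : Finset α) (hF : F ⊆ V) :
    sInf {w : ℝ | ∃ lam : Finset α → ℝ,
        (∀ e ∈ E, lam e ∈ Set.Icc (0 : ℝ) 1) ∧
        (∀ x ∈ F, 1 ≤ ∑ e ∈ E.filter (fun e => x ∈ e), lam e) ∧
        w = ∑ e ∈ E, lam e}
      = sInf {w : ℝ | ∃ lam : Finset α → ℝ,
        (∀ e ∈ E, lam e = 0 ∨ lam e = 1) ∧
        (∀ x ∈ F, 1 ≤ ∑ e ∈ E.filter (fun e => x ∈ e), lam e) ∧
        w = ∑ e ∈ E, lam e} := by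
  set Sfrac := {w : ℝ | ∃ lam : Finset α → ℝ,
        (∀ e ∈ E, lam e ∈ Set.Icc (0 : ℝ) 1) ∧
        (∀ x ∈ F, 1 ≤ ∑ e ∈ E.filter (fun e => x ∈ e), lam e) ∧
        w = ∑ e ∈ E, lam e} with hSf
  set Sint := {w : ℝ | ∃ lam : Finset α → ℝ,
        (∀ e ∈ E, lam e = 0 ∨ lam e = 1) ∧
        (∀ x ∈ F, 1 ≤ ∑ e ∈ E.filter (fun e => x ∈ e), lam e) ∧
        w = ∑ e ∈ E, lam e} with hSi
  have hsub : Sint ⊆ Sfrac := by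
    rintro w ⟨lam, h01, hcov, rfl⟩
    refine ⟨lam, fun e he => ?_, hcov, rfl⟩
    rcases h01 e he with h | h <;> rw [h] <;> constructor <;> norm_num
  have hne_int : Sint.Nonempty := by
    refine ⟨∑ e ∈ E, (1:ℝ), fun _ => 1, fun e _ => Or.inr rfl, ?_, rfl⟩
    intro y hy
    obtain ⟨e, heE, hye⟩ := hcovered y (hF hy)
    have hmem : e ∈ E.filter (fun e => y ∈ e) := Finset.mem_filter.2 ⟨heE, hye⟩
    have := Finset.single_le_sum (f := fun _ : Finset α => (1:ℝ))
      (fun i _ => by norm_num) hmem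
    simpa using this
  have hne_frac : Sfrac.Nonempty := hne_int.mono hsub
  have hbdd_frac : BddBelow Sfrac := by
    refine ⟨0, ?_⟩
    rintro w ⟨lam, h01, -, rfl⟩
    exact Finset.sum_nonneg fun e he => (h01 e he).1
  have hbdd_int : BddBelow Sint := hbdd_frac.mono hsub
  refine le_antisymm (csInf_le_csInf hbdd_frac hne_int hsub) ?_
  apply le_csInf hne_frac
  rintro w ⟨lam, h01, hcov, rfl⟩
  have hhierF : ∀ x ∈ F, ∀ y ∈ F,
      E.filter (fun e => x ∈ e) ⊆ E.filter (fun e => y ∈ e) ∨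
      E.filter (fun e => y ∈ e) ⊆ E.filter (fun e => x ∈ e) ∨
      E.filter (fun e => x ∈ e) ∩ E.filter (fun e => y ∈ e) = ∅ :=
    fun x hx y hy => hhier x (hF hx) y (hF hy)
  obtain ⟨mu, hmu01, hmucov, hmuw⟩ :=
    hier_round E F hhierF lam (fun e he => (h01 e he).1) hcov
  have hmem : ∑ e ∈ E, mu e ∈ Sint := ⟨mu, hmu01, hmucov, rfl⟩
  exact le_trans (csInf_le hbdd_int hmem) hmuw
end
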